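/- arXiv:2106.14840 — 8 statements merged into one kernel-verified Lean document; each statement's English description precedes it below -/
import Mathlib

section
/- For every real p > 1, setting a := 8^{p/(p−1)}, the strict inequality (3a+3)^p + 3(3a+2)^p + 4^p > 4(3a+2)^p + 8^p holds. (This inequality shows that in the example of Figure 1, the multiway cut placing the non-terminal u₂ with the terminal u₁, which yields a disconnected part, has strictly smaller ℓ_p-norm objective value than any multiway cut placing u₂ with one of the other terminals.) -/
/-! With `x = 3a + 2` the claim reduces to `x^p + 8^p < (x + 1)^p + 4^p`. By Bernoulli's inequality
`(x + 1)^p ≥ x^p + p x^(p-1)`, and `p x^(p-1) > a^(p-1) = 8^p` because `x > a` and `p > 1`;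
the exponent `p/(p-1)` in the definition of `a` is chosen exactly so that `a^(p-1) = 8^p`. -/

namespace Real

theorem rpow_add_mul_rpow_sub_one_mul_le_rpow_add {x h p : ℝ} (hx : 0 < x) (hh : -x ≤ h)
    (hp : 1 ≤ p) : x ^ p + p * x ^ (p - 1) * h ≤ (x + h) ^ p := by
  have hs : -1 ≤ h / x := by rwa [le_div_iff₀ hx, neg_one_mul]
  calc x ^ p + p * x ^ (p - 1) * h = x ^ p * (1 + p * (h / x)) := by
        rw [rpow_sub_one hx.ne']; field_simp
    _ ≤ x ^ p * (1 + h / x) ^ p :=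
        mul_le_mul_of_nonneg_left (one_add_mul_self_le_rpow_one_add hs hp) (by positivity)
    _ = (x + h) ^ p := by
        rw [← mul_rpow hx.le (by linarith), mul_add, mul_div_cancel₀ _ hx.ne', mul_one]

theorem rpow_div_sub_one_rpow_sub_one {b p : ℝ} (hb : 0 ≤ b) (hp : p ≠ 1) :
    (b ^ (p / (p - 1))) ^ (p - 1) = b ^ p := by
  rw [← rpow_mul hb, div_mul_cancel₀ _ (sub_ne_zero.mpr hp)]

theorem rpow_add_rpow_sub_one_lt_rpow_add_one {a x p : ℝ} (ha : 0 < a) (hax : a ≤ x)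
    (hp : 1 < p) : x ^ p + a ^ (p - 1) < (x + 1) ^ p := by
  have hx : 0 < x := ha.trans_le hax
  have hderiv : a ^ (p - 1) < p * x ^ (p - 1) :=
    calc a ^ (p - 1) ≤ x ^ (p - 1) := rpow_le_rpow ha.le hax (by linarith)
      _ < p * x ^ (p - 1) := lt_mul_left (rpow_pos_of_pos hx _) hp
  have := rpow_add_mul_rpow_sub_one_mul_le_rpow_add hx (by linarith : -x ≤ 1) hp.le
  linarith

end Real

/-- For every `p > 1` and `a = 8^{p/(p−1)}`, we have
`(3a+3)^p + 3(3a+2)^p + 4^p > 4(3a+2)^p + 8^p`. -/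
theorem disconnected_example_inequality (p : ℝ) (hp : 1 < p) (a : ℝ)
    (ha : a = (8 : ℝ) ^ (p / (p - 1))) :
    4 * (3 * a + 2) ^ p + 8 ^ p < (3 * a + 3) ^ p + 3 * (3 * a + 2) ^ p + 4 ^ p := by
  have ha0 : 0 < a := ha ▸ Real.rpow_pos_of_pos (by norm_num) _
  have hap : a ^ (p - 1) = 8 ^ p := ha ▸ Real.rpow_div_sub_one_rpow_sub_one (by norm_num) hp.ne'
  have key := Real.rpow_add_rpow_sub_one_lt_rpow_add_one ha0 (by linarith : a ≤ 3 * a + 2) hp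
  rw [hap, show 3 * a + 2 + 1 = 3 * a + 3 by ring] at key
  have h4 : (0 : ℝ) < 4 ^ p := Real.rpow_pos_of_pos (by norm_num) _
  linarith
end

section
/- Let p ≥ 1 be real, c ≥ 0 a real number, ℓ ≥ 1 an integer, and a₁, …, a_ℓ nonnegative reals. Then (c + Σ_{q=1}^ℓ a_q)^p + (ℓ − 1)·c^p ≥ Σ_{q=1}^ℓ (c + a_q)^p. -/
open Finset

theorem ConvexOn.map_add_map_le_of_add_eq {s : Set ℝ} {f : ℝ → ℝ} (hf : ConvexOn ℝ s f)
    {x₁ x₂ x₃ x₄ : ℝ} (h₁ : x₁ ∈ s) (h₄ : x₄ ∈ s) (h₁₂ : x₁ ≤ x₂) (h₁₃ : x₁ ≤ x₃)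
    (hsum : x₂ + x₃ = x₁ + x₄) :
    f x₂ + f x₃ ≤ f x₁ + f x₄ := by
  rcases (show x₁ ≤ x₄ by linarith).eq_or_lt with h | h
  · obtain rfl : x₂ = x₁ := by linarith
    obtain rfl : x₃ = x₂ := by linarith
    rw [h]
  have hd : 0 < x₄ - x₁ := sub_pos.2 h
  have hd₀ : x₄ - x₁ ≠ 0 := hd.ne'
  have chord : ∀ x, x₁ ≤ x → x ≤ x₄ →
      f x ≤ (x₄ - x) / (x₄ - x₁) * f x₁ + (x - x₁) / (x₄ - x₁) * f x₄ := by
    intro x hx₁ hx₄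
    have hx : ((x₄ - x) / (x₄ - x₁)) • x₁ + ((x - x₁) / (x₄ - x₁)) • x₄ = x := by
      simp only [smul_eq_mul]
      field_simp
      ring
    have hconv := hf.2 h₁ h₄ (div_nonneg (sub_nonneg.2 hx₄) hd.le)
      (div_nonneg (sub_nonneg.2 hx₁) hd.le) (by field_simp; ring)
    rw [hx] at hconv
    simpa only [smul_eq_mul] using hconv
  have hw₁ : (x₄ - x₂) / (x₄ - x₁) + (x₄ - x₃) / (x₄ - x₁) = 1 := by field_simp; linarith
  have hw₄ : (x₂ - x₁) / (x₄ - x₁) + (x₃ - x₁) / (x₄ - x₁) = 1 := by field_simp; linarith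
  -- The chord weights of `x₂` and `x₃` are swapped, so the two bounds add up to `f x₁ + f x₄`.
  linear_combination chord x₂ h₁₂ (by linarith) + chord x₃ h₁₃ (by linarith) + f x₁ * hw₁ +
    f x₄ * hw₄

theorem ConvexOn.sum_map_add_le {ι : Type*} {f : ℝ → ℝ} {c : ℝ} (hf : ConvexOn ℝ (Set.Ici c) f)
    (s : Finset ι) {a : ι → ℝ} (ha : ∀ i ∈ s, 0 ≤ a i) :
    ∑ i ∈ s, f (c + a i) ≤ f (c + ∑ i ∈ s, a i) + ((#s : ℝ) - 1) * f c := by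
  induction s using Finset.cons_induction with
  | empty => simp
  | cons i t hit ih =>
    rw [forall_mem_cons] at ha
    have hmerge : f (c + a i) + f (c + ∑ j ∈ t, a j) ≤ f c + f (c + (a i + ∑ j ∈ t, a j)) :=
      hf.map_add_map_le_of_add_eq Set.self_mem_Ici
        (by simp only [Set.mem_Ici]; linarith [ha.1, sum_nonneg ha.2])
        (by linarith [ha.1]) (by linarith [sum_nonneg ha.2]) (by ring)
    rw [sum_cons, sum_cons, card_cons]
    push_cast
    linarith [ih ha.2]

theorem merge_rpow_bound_general (p c : ℝ) (hp : 1 ≤ p) (hc : 0 ≤ c) (ℓ : ℕ)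
    (a : Fin ℓ → ℝ) (ha : ∀ q, 0 ≤ a q) :
    ∑ q, (c + a q) ^ p ≤ (c + ∑ q, a q) ^ p + ((ℓ : ℝ) - 1) * c ^ p := by
  have hconv : ConvexOn ℝ (Set.Ici c) fun x : ℝ => x ^ p :=
    (convexOn_rpow hp).subset (Set.Ici_subset_Ici.2 hc) (convex_Ici c)
  simpa using hconv.sum_map_add_le univ fun q _ => ha q

/-- For `p ≥ 1`, `c ≥ 0`, `ℓ ≥ 1` and nonnegative `a₁,…,a_ℓ`:
`(c + Σ a_q)^p + (ℓ−1)·c^p ≥ Σ (c + a_q)^p`. -/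
theorem merge_rpow_bound (p c : ℝ) (hp : 1 ≤ p) (hc : 0 ≤ c) (ℓ : ℕ) (hℓ : 1 ≤ ℓ)
    (a : Fin ℓ → ℝ) (ha : ∀ q, 0 ≤ a q) :
    ∑ q, (c + a q) ^ p ≤ (c + ∑ q, a q) ^ p + ((ℓ : ℝ) - 1) * c ^ p :=
  merge_rpow_bound_general p c hp hc ℓ a ha
end

section
/- Let p ≥ 1 be real, k ≥ 1 an integer, D > 0 real, y₁, …, y_k nonnegative reals with Y := Σ_{i=1}^k y_i > 0, and w₁, …, w_k nonnegative reals with Σ_{i=1}^k w_i^p ≤ D. Then there exists an index q ∈ [k] such that y_q > Y/(2k) and w_q^p ≤ 2·y_q·D/Y. -/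
open Finset

/-! The indices with `y_i > Y/(2k)` carry at least half of `Y`, since the others carry at most
`k · Y/(2k)`. If each of them had `w_i^p > 2 y_i D / Y`, summing over them alone would give
`Σ w_i^p > D`. -/

theorem Finset.sum_le_sum_filter_lt_add_card_mul {ι : Type*} (s : Finset ι) (f : ι → ℝ)
    {t : ℝ} (ht : 0 ≤ t) :
    ∑ i ∈ s, f i ≤ ∑ i ∈ s with t < f i, f i + #s * t := by
  have hlight : ∑ i ∈ s with ¬t < f i, f i ≤ #s * t :=
    calc ∑ i ∈ s with ¬t < f i, f i
        ≤ #{i ∈ s | ¬t < f i} * t := by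
          simpa using sum_le_card_nsmul _ f t fun i hi => not_lt.1 (mem_filter.1 hi).2
      _ ≤ #s * t := by gcongr; exact filter_subset _ s
  rw [← sum_filter_add_sum_filter_not s (fun i => t < f i) f]
  linarith

theorem exists_heavy_of_sum_le {ι : Type*} [Fintype ι] (a y : ι → ℝ) {D : ℝ}
    (ha : ∀ i, 0 ≤ a i) (hY : 0 < ∑ i, y i) (haD : ∑ i, a i ≤ D) :
    ∃ q, (∑ i, y i) / (2 * Fintype.card ι) < y q ∧ a q ≤ 2 * y q * D / ∑ i, y i := by
  set Y := ∑ i, y i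
  obtain ⟨i₀, -⟩ := nonempty_of_sum_ne_zero hY.ne'
  have hcard : (0 : ℝ) < Fintype.card ι := by exact_mod_cast Fintype.card_pos_iff.2 ⟨i₀⟩
  set H := ({i | Y / (2 * Fintype.card ι) < y i} : Finset ι)
  have hHalf : Y / 2 ≤ ∑ i ∈ H, y i := by
    have hsplit := sum_le_sum_filter_lt_add_card_mul univ y (t := Y / (2 * Fintype.card ι))
      (by positivity)
    have hlight : (Fintype.card ι : ℝ) * (Y / (2 * Fintype.card ι)) = Y / 2 := by field_simp
    rw [card_univ, hlight] at hsplit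
    linarith
  have hD : 0 ≤ D := (sum_nonneg fun i _ => ha i).trans haD
  have hHa : ∑ i ∈ H, a i ≤ ∑ i ∈ H, 2 * D / Y * y i :=
    calc ∑ i ∈ H, a i
        ≤ ∑ i, a i := sum_le_sum_of_subset_of_nonneg (subset_univ H) fun i _ _ => ha i
      _ ≤ 2 * D / Y * (Y / 2) := haD.trans_eq (by field_simp)
      _ ≤ 2 * D / Y * ∑ i ∈ H, y i := by gcongr
      _ = ∑ i ∈ H, 2 * D / Y * y i := mul_sum _ _ _
  have hH : H.Nonempty := nonempty_of_sum_ne_zero (f := y) (by linarith)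
  obtain ⟨q, hqH, hq⟩ := exists_le_of_sum_le hH hHa
  exact ⟨q, (mem_filter.1 hqH).2, hq.trans_eq (by ring)⟩

theorem heavy_low_cut_part_exists_general (p : ℝ) (k : ℕ)
    (D : ℝ) (y w : Fin k → ℝ)
    (hw : ∀ i, 0 ≤ w i)
    (hY : 0 < ∑ i, y i) (hwD : ∑ i, (w i) ^ p ≤ D) :
    ∃ q : Fin k, (∑ i, y i) / (2 * k) < y q ∧
      (w q) ^ p ≤ 2 * y q * D / (∑ i, y i) := by
  simpa using
    exists_heavy_of_sum_le (fun i => w i ^ p) y (fun i => Real.rpow_nonneg (hw i) p) hY hwD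

/-- Averaging claim behind the multiplicative-weights step: if `Σ w_i^p ≤ D`, there is an
index `q` with `y_q > Y/(2k)` and `w_q^p ≤ 2·y_q·D/Y`, where `Y = Σ y_i > 0`. -/
theorem heavy_low_cut_part_exists (p : ℝ) (hp : 1 ≤ p) (k : ℕ) (hk : 1 ≤ k)
    (D : ℝ) (hD : 0 < D) (y w : Fin k → ℝ)
    (hy : ∀ i, 0 ≤ y i) (hw : ∀ i, 0 ≤ w i)
    (hY : 0 < ∑ i, y i) (hwD : ∑ i, (w i) ^ p ≤ D) :
    ∃ q : Fin k, (∑ i, y i) / (2 * k) < y q ∧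
      (w q) ^ p ≤ 2 * y q * D / (∑ i, y i) :=
  heavy_low_cut_part_exists_general p k D y w hw hY hwD
end

section
/- Let V be a finite set, let f : 2^V → ℝ be a nonnegative, symmetric (f(S) = f(V∖S) for all S), submodular (f(A)+f(B) ≥ f(A∩B)+f(A∪B) for all A,B) set function, let p ≥ 1 be real, and let S₁, …, S_m ⊆ V be subsets with S₁ ∪ ⋯ ∪ S_m = V. Then there exists a partition 𝒬 of V into nonempty pairwise disjoint parts such that: (1) every part Q ∈ 𝒬 is contained in some S_i (in particular, if each S_i contains at most one element of a designated terminal set T ⊆ V, then so does each part of 𝒬); (2) |𝒬| ≤ m; and (3) Σ_{Q ∈ 𝒬} f(Q)^p ≤ Σ_{i=1}^m f(S_i)^p. -/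
/-!
A symmetric submodular function is posimodular: `f (A \ B) + f (B \ A) ≤ f A + f B`.
Hence for any two crossing sets of the family, one of them can be shrunk to its difference
with the other without increasing its `f`-value, nor (as `t ↦ t ^ p` is monotone on `[0, ∞)`)
its `p`-th power. Each such step keeps the union and strictly decreases the total size of the
family, so finitely many steps leave a pairwise disjoint family; its nonempty members form the
partition.
-/

open Finset Function

namespace Finset

variable {V : Type*} [DecidableEq V]

theorem posimodular_of_symmetric_submodular [Fintype V] {f : Finset V → ℝ}
    (hsym : ∀ S, f S = f Sᶜ) (hsub : ∀ A B, f (A ∩ B) + f (A ∪ B) ≤ f A + f B)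
    (A B : Finset V) :
    f (A \ B) + f (B \ A) ≤ f A + f B := by
  have hunion : f (A ∪ Bᶜ) = f (B \ A) := by
    rw [hsym, compl_union, compl_compl, sdiff_eq_inter_compl, inter_comm]
  simpa only [← sdiff_eq_inter_compl, hunion, ← hsym] using hsub A Bᶜ

section Uncrossing

variable {ι : Type*} [DecidableEq ι]

theorem update_sdiff_subset (Q : ι → Finset V) (i j k : ι) :
    update Q i (Q i \ Q j) k ⊆ Q k := by
  rcases eq_or_ne k i with rfl | hk
  · simp
  · simp [update_of_ne hk]

theorem biUnion_update_sdiff [Fintype ι] (Q : ι → Finset V) {i j : ι} (hij : i ≠ j) :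
    univ.biUnion (update Q i (Q i \ Q j)) = univ.biUnion Q := by
  refine (biUnion_mono fun k _ => update_sdiff_subset Q i j k).antisymm fun x hx => ?_
  obtain ⟨k, -, hxk⟩ := mem_biUnion.1 hx
  simp only [mem_biUnion, mem_univ, true_and]
  rcases eq_or_ne k i with rfl | hk
  · by_cases hxj : x ∈ Q j
    · exact ⟨j, by rwa [update_of_ne hij.symm]⟩
    · exact ⟨k, by simp [hxk, hxj]⟩
  · exact ⟨k, by rwa [update_of_ne hk]⟩

theorem sum_card_update_sdiff_lt [Fintype ι] (Q : ι → Finset V) {i j : ι}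
    (hij : (Q i ∩ Q j).Nonempty) :
    ∑ k, #(update Q i (Q i \ Q j) k) < ∑ k, #(Q k) := by
  refine sum_lt_sum (fun k _ => card_le_card (update_sdiff_subset Q i j k)) ⟨i, mem_univ i, ?_⟩
  obtain ⟨x, hx⟩ := hij
  obtain ⟨hxi, hxj⟩ := mem_inter.1 hx
  rw [update_self]
  exact card_lt_card ⟨sdiff_subset, fun h => (mem_sdiff.1 (h hxi)).2 hxj⟩

theorem sum_update_sdiff_le [Fintype ι] {g : Finset V → ℝ} (Q : ι → Finset V) {i j : ι}
    (hg : g (Q i \ Q j) ≤ g (Q i)) :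
    ∑ k, g (update Q i (Q i \ Q j) k) ≤ ∑ k, g (Q k) := by
  refine sum_le_sum fun k _ => ?_
  rcases eq_or_ne k i with rfl | hk
  · rwa [update_self]
  · rw [update_of_ne hk]

theorem exists_pairwise_disjoint_shrinking [Fintype ι] {g : Finset V → ℝ}
    (hg : ∀ A B, g (A \ B) ≤ g A ∨ g (B \ A) ≤ g B) (Q : ι → Finset V) :
    ∃ Q' : ι → Finset V, (∀ i, Q' i ⊆ Q i) ∧ Pairwise (Disjoint on Q') ∧
      univ.biUnion Q' = univ.biUnion Q ∧ ∑ i, g (Q' i) ≤ ∑ i, g (Q i) := by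
  induction hn : ∑ i, #(Q i) using Nat.strong_induction_on generalizing Q with
  | _ n ih =>
  by_cases hdisj : Pairwise (Disjoint on Q)
  · exact ⟨Q, fun _ => subset_rfl, hdisj, rfl, le_rfl⟩
  obtain ⟨a, b, hab, hcross, hga⟩ :
      ∃ a b, a ≠ b ∧ (Q a ∩ Q b).Nonempty ∧ g (Q a \ Q b) ≤ g (Q a) := by
    obtain ⟨i, j, hij, hnd⟩ : ∃ i j, i ≠ j ∧ ¬Disjoint (Q i) (Q j) := by
      simpa [Pairwise] using hdisj
    rw [not_disjoint_iff_nonempty_inter] at hnd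
    rcases hg (Q i) (Q j) with h | h
    · exact ⟨i, j, hij, hnd, h⟩
    · exact ⟨j, i, hij.symm, inter_comm (Q i) (Q j) ▸ hnd, h⟩
  obtain ⟨Q', hsub, hdisj', hunion, hsum⟩ :=
    ih _ (hn ▸ sum_card_update_sdiff_lt Q hcross) (update Q a (Q a \ Q b)) rfl
  exact ⟨Q', fun k => (hsub k).trans (update_sdiff_subset Q a b k), hdisj',
    hunion.trans (biUnion_update_sdiff Q hab), hsum.trans (sum_update_sdiff_le Q hga)⟩

end Uncrossing

section NonemptyMembers

variable {ι : Type*} [Fintype ι] (Q : ι → Finset V)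

theorem biUnion_image_erase_empty :
    ((univ.image Q).erase ∅).biUnion id = univ.biUnion Q := by
  ext x
  simp only [mem_biUnion, mem_erase, mem_image, mem_univ, true_and, id]
  constructor
  · rintro ⟨_, ⟨-, i, rfl⟩, hx⟩
    exact ⟨i, hx⟩
  · rintro ⟨i, hx⟩
    exact ⟨Q i, ⟨ne_empty_of_mem hx, i, rfl⟩, hx⟩

theorem sum_image_erase_empty_le {g : Finset V → ℝ} (hg : ∀ S, 0 ≤ g S) :
    ∑ S ∈ (univ.image Q).erase ∅, g S ≤ ∑ i, g (Q i) :=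
  (sum_le_sum_of_subset_of_nonneg (erase_subset _ _) fun S _ _ => hg S).trans
    (sum_image_le_of_nonneg fun S _ => hg S)

end NonemptyMembers

end Finset

/-- Uncrossing lemma: given a nonnegative symmetric submodular set function `f`, `p ≥ 1`,
and sets `S₁,…,S_m` covering `V`, there is a partition `𝒬` of `V` into nonempty pairwise
disjoint parts, each contained in some `S_i`, with at most `m` parts and
`Σ_{Q ∈ 𝒬} f(Q)^p ≤ Σ_i f(S_i)^p`. -/
theorem uncrossing_lemma {V : Type*} [Fintype V] [DecidableEq V] (f : Finset V → ℝ)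
    (hnonneg : ∀ S, 0 ≤ f S) (hsym : ∀ S : Finset V, f S = f Sᶜ)
    (hsub : ∀ A B : Finset V, f (A ∩ B) + f (A ∪ B) ≤ f A + f B)
    (p : ℝ) (hp : 1 ≤ p) (m : ℕ) (S : Fin m → Finset V)
    (hcover : Finset.univ.biUnion (fun i => S i) = (Finset.univ : Finset V)) :
    ∃ 𝒬 : Finset (Finset V),
      (∀ Q ∈ 𝒬, Q ≠ ∅) ∧
      (∀ Q ∈ 𝒬, ∀ Q' ∈ 𝒬, Q ≠ Q' → Disjoint Q Q') ∧
      𝒬.biUnion id = (Finset.univ : Finset V) ∧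
      (∀ Q ∈ 𝒬, ∃ i : Fin m, Q ⊆ S i) ∧
      𝒬.card ≤ m ∧
      ∑ Q ∈ 𝒬, f Q ^ p ≤ ∑ i, f (S i) ^ p := by
  have hstep (A B : Finset V) : f (A \ B) ^ p ≤ f A ^ p ∨ f (B \ A) ^ p ≤ f B ^ p :=
    (le_or_le_of_add_le_add (posimodular_of_symmetric_submodular hsym hsub A B)).imp
      (Real.rpow_le_rpow (hnonneg _) · (zero_le_one.trans hp))
      (Real.rpow_le_rpow (hnonneg _) · (zero_le_one.trans hp))
  obtain ⟨Q, hQS, hdisj, hunion, hsum⟩ :=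
    exists_pairwise_disjoint_shrinking (g := (f · ^ p)) hstep S
  have hmem {A : Finset V} (hA : A ∈ (univ.image Q).erase ∅) : ∃ i, Q i = A := by
    simpa using (mem_erase.1 hA).2
  refine ⟨(univ.image Q).erase ∅, fun A hA => (mem_erase.1 hA).1, ?_, ?_, ?_, ?_, ?_⟩
  · intro A hA B hB hAB
    obtain ⟨i, rfl⟩ := hmem hA
    obtain ⟨j, rfl⟩ := hmem hB
    exact hdisj fun hij => hAB (hij ▸ rfl)
  · rw [biUnion_image_erase_empty, hunion, hcover]
  · intro A hA
    obtain ⟨i, rfl⟩ := hmem hA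
    exact ⟨i, hQS i⟩
  · exact card_erase_le.trans (card_image_le.trans (by simp))
  · exact (sum_image_erase_empty_le Q fun A => Real.rpow_nonneg (hnonneg A) p).trans hsum
end

section
/- For every integer k ≥ 2 and real p ≥ 1, the inequality ((k−1)^p + (k−1))^{1/p} ≥ (k^{1−1/p}/2) · (2(k−1)/k) · k^{1/p} holds. (Here ((k−1)^p + (k−1))^{1/p} is the optimal integral ℓ_p-norm multiway-cut value on the unit-weight star with k leaf terminals, while (2(k−1)/k)·k^{1/p} is the objective value of the feasible fractional solution x(v,i) = 1/k of the natural convex programming relaxation; hence the convex program has integrality gap at least k^{1−1/p}/2.) -/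
/-!
The left-hand side collapses to `k - 1`: the powers `k ^ (1 - 1/p)` and `k ^ (1/p)` multiply
to `k`, which cancels the denominator of `2 (k - 1) / k`. Since `k - 1 = ((k - 1) ^ p) ^ (1/p)`,
the inequality then follows from monotonicity of `t ↦ t ^ (1/p)`.
-/

namespace Real

theorem rpow_one_sub_one_div_mul_rpow_one_div {x : ℝ} (hx : 0 < x) (p : ℝ) :
    x ^ (1 - 1 / p) * x ^ (1 / p) = x := by
  rw [← rpow_add hx, sub_add_cancel, rpow_one]

theorem rpow_one_sub_one_div_div_two_mul_mul_rpow_one_div {x : ℝ} (hx : 0 < x) (p : ℝ) :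
    (x ^ (1 - 1 / p) / 2) * (2 * (x - 1) / x) * x ^ (1 / p) = x - 1 := by
  calc (x ^ (1 - 1 / p) / 2) * (2 * (x - 1) / x) * x ^ (1 / p)
      = (x ^ (1 - 1 / p) * x ^ (1 / p)) * ((x - 1) / x) := by ring
    _ = x - 1 := by rw [rpow_one_sub_one_div_mul_rpow_one_div hx]; field_simp

theorem le_rpow_add_rpow_one_div {a b p : ℝ} (ha : 0 ≤ a) (hb : 0 ≤ b) (hp : 0 < p) :
    a ≤ (a ^ p + b) ^ (1 / p) :=
  calc a = (a ^ p) ^ (1 / p) := by rw [← rpow_mul ha, mul_one_div_cancel hp.ne', rpow_one]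
    _ ≤ (a ^ p + b) ^ (1 / p) := by gcongr; linarith

end Real

/-- Integrality gap inequality on the star instance: for `k ≥ 2` and `p ≥ 1`,
`((k−1)^p + (k−1))^{1/p} ≥ (k^{1−1/p}/2) · (2(k−1)/k) · k^{1/p}`. -/
theorem star_integrality_gap (k : ℕ) (hk : 2 ≤ k) (p : ℝ) (hp : 1 ≤ p) :
    ((k : ℝ) ^ (1 - 1 / p) / 2) * (2 * ((k : ℝ) - 1) / k) * (k : ℝ) ^ (1 / p) ≤
      (((k : ℝ) - 1) ^ p + ((k : ℝ) - 1)) ^ (1 / p) := by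
  have hk' : (2 : ℝ) ≤ k := by exact_mod_cast hk
  rw [Real.rpow_one_sub_one_div_div_two_mul_mul_rpow_one_div (by linarith)]
  exact Real.le_rpow_add_rpow_one_div (by linarith) (by linarith) (by linarith)
end

section
/- Given a finite set V with symmetric nonnegative edge weights w and distinct terminals t₁, …, t_k ∈ V (k ≥ 1), let S₁, …, S_k ⊆ V be pairwise disjoint sets with t_i ∈ S_i for each i, let (P₁, …, P_k) be a partition of V with t_i ∈ P_i for each i, and suppose cut(S_i) ≤ cut(P_i) for every i (as holds when each S_i is a minimum weight cut separating t_i from the other terminals). Set R := V ∖ (S₁ ∪ ⋯ ∪ S_k). Then for every real p ≥ 1, the partition (S₁ ∪ R, S₂, …, S_k) is a multiway cut satisfying cut(S₁ ∪ R)^p + Σ_{i=2}^k cut(S_i)^p ≤ (2^p·k^{p−1} + 1) · Σ_{i=1}^k cut(P_i)^p; in particular its ℓ_p-norm objective value is at most 3·k^{1−1/p} times that of (P₁, …, P_k). -/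
/-!
By symmetry of `w`, the leftover set `R = (⋃ S_j)ᶜ` has the cut of `⋃ S_j`, which by
subadditivity is at most `T := Σ cut(P_j)`; hence `cut(S₁ ∪ R) ≤ 2T`, and the power-mean
inequality `T^p ≤ k^{p-1} Σ cut(P_j)^p` bounds its `p`-th power. Each other piece satisfies
`cut(S_i)^p ≤ cut(P_i)^p`. The `ℓ_p` bound then follows from `2^p + 1 ≤ 3^p`.
-/

open Finset

/-- The cut value of `S ⊆ V` with respect to edge weights `w`. -/
noncomputable def cutval {V : Type*} [Fintype V] [DecidableEq V]
    (w : V → V → ℝ) (S : Finset V) : ℝ :=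
  ∑ u ∈ S, ∑ v ∈ Sᶜ, w u v

section Cut

variable {V : Type*} [Fintype V] [DecidableEq V] {w : V → V → ℝ}

lemma cutval_nonneg (hnn : ∀ u v, 0 ≤ w u v) (S : Finset V) : 0 ≤ cutval w S :=
  sum_nonneg fun _ _ => sum_nonneg fun _ _ => hnn _ _

lemma cutval_compl (hsymm : ∀ u v, w u v = w v u) (S : Finset V) :
    cutval w Sᶜ = cutval w S := by
  rw [cutval, cutval, compl_compl, sum_comm]
  exact sum_congr rfl fun _ _ => sum_congr rfl fun _ _ => hsymm _ _

lemma cutval_union_le (hnn : ∀ u v, 0 ≤ w u v) (A B : Finset V) :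
    cutval w (A ∪ B) ≤ cutval w A + cutval w B := by
  have outgoing_le (X : Finset V) (hX : X ⊆ A ∪ B) :
      ∑ u ∈ X, ∑ v ∈ (A ∪ B)ᶜ, w u v ≤ cutval w X :=
    sum_le_sum fun u _ => sum_le_sum_of_subset_of_nonneg (compl_subset_compl.mpr hX)
      fun v _ _ => hnn u v
  calc cutval w (A ∪ B)
      ≤ cutval w (A ∪ B) + ∑ u ∈ A ∩ B, ∑ v ∈ (A ∪ B)ᶜ, w u v :=
        le_add_of_nonneg_right (sum_nonneg fun u _ => sum_nonneg fun v _ => hnn u v)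
    _ = ∑ u ∈ A, ∑ v ∈ (A ∪ B)ᶜ, w u v + ∑ u ∈ B, ∑ v ∈ (A ∪ B)ᶜ, w u v :=
        sum_union_inter
    _ ≤ cutval w A + cutval w B :=
        add_le_add (outgoing_le A subset_union_left) (outgoing_le B subset_union_right)

lemma cutval_biUnion_le {ι : Type*} [DecidableEq ι] (hnn : ∀ u v, 0 ≤ w u v)
    (s : Finset ι) (S : ι → Finset V) :
    cutval w (s.biUnion S) ≤ ∑ i ∈ s, cutval w (S i) := by
  induction s using cons_induction with
  | empty => simp [cutval]
  | cons a s ha ih =>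
    rw [cons_eq_insert, sum_insert ha, biUnion_insert]
    exact (cutval_union_le hnn _ _).trans (add_le_add le_rfl ih)

lemma cutval_union_compl_biUnion_le {ι : Type*} [DecidableEq ι]
    (hsymm : ∀ u v, w u v = w v u) (hnn : ∀ u v, 0 ≤ w u v)
    (s : Finset ι) (S : ι → Finset V) (i : ι) :
    cutval w (S i ∪ (s.biUnion S)ᶜ) ≤ cutval w (S i) + ∑ j ∈ s, cutval w (S j) := by
  refine (cutval_union_le hnn _ _).trans (add_le_add le_rfl ?_)
  rw [cutval_compl hsymm]
  exact cutval_biUnion_le hnn s S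

end Cut

lemma two_rpow_mul_add_one_le {k p : ℝ} (hk : 1 ≤ k) (hp : 1 ≤ p) :
    2 ^ p * k ^ (p - 1) + 1 ≤ (3 * k ^ (1 - 1 / p)) ^ p := by
  have hk_pow : 1 ≤ k ^ (p - 1) := Real.one_le_rpow hk (by linarith)
  have h_three : (2 : ℝ) ^ p + 1 ≤ 3 ^ p := by
    simpa [Real.one_rpow, show (2 : ℝ) + 1 = 3 by norm_num] using
      Real.add_rpow_le_rpow_add (by norm_num : (0 : ℝ) ≤ 2) zero_le_one hp
  have h_exp : (1 - 1 / p) * p = p - 1 := by field_simp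
  calc 2 ^ p * k ^ (p - 1) + 1 ≤ (2 ^ p + 1) * k ^ (p - 1) := by nlinarith
    _ ≤ 3 ^ p * k ^ (p - 1) := by gcongr
    _ = (3 * k ^ (1 - 1 / p)) ^ p := by
        rw [Real.mul_rpow (by norm_num) (by positivity), ← Real.rpow_mul (by linarith), h_exp]

lemma rpow_one_div_le_mul_of_le_rpow_mul {x a q p : ℝ} (hx : 0 ≤ x) (ha : 0 ≤ a)
    (hq : 0 ≤ q) (hp : 0 < p) (h : x ≤ a ^ p * q) :
    x ^ (1 / p) ≤ a * q ^ (1 / p) := by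
  rw [one_div, Real.rpow_inv_le_iff_of_pos hx (by positivity) hp,
    Real.mul_rpow ha (by positivity), ← Real.rpow_mul hq, inv_mul_cancel₀ hp.ne', Real.rpow_one]
  exact h

theorem trivial_approximation_general {V : Type*} [Fintype V] [DecidableEq V]
    (w : V → V → ℝ) (hsymm : ∀ u v, w u v = w v u) (hnn : ∀ u v, 0 ≤ w u v)
    (k : ℕ) (hk : 1 ≤ k)
    (S P : Fin k → Finset V)
    (hSP : ∀ i, cutval w (S i) ≤ cutval w (P i))
    (p : ℝ) (hp : 1 ≤ p)
    (R : Finset V) (hR : R = Finset.univ \ Finset.univ.biUnion S) :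
    cutval w (S ⟨0, hk⟩ ∪ R) ^ p + ∑ i ∈ Finset.univ.erase ⟨0, hk⟩, cutval w (S i) ^ p ≤
        ((2 : ℝ) ^ p * (k : ℝ) ^ (p - 1) + 1) * ∑ i, cutval w (P i) ^ p ∧
      (cutval w (S ⟨0, hk⟩ ∪ R) ^ p +
          ∑ i ∈ Finset.univ.erase ⟨0, hk⟩, cutval w (S i) ^ p) ^ (1 / p) ≤
        3 * (k : ℝ) ^ (1 - 1 / p) * (∑ i, cutval w (P i) ^ p) ^ (1 / p) := by
  set i₀ : Fin k := ⟨0, hk⟩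
  set Q := ∑ i, cutval w (P i) ^ p
  have hp₀ : 0 ≤ p := by linarith
  have hP : ∀ i, 0 ≤ cutval w (P i) := fun i => cutval_nonneg hnn (P i)
  have hQ : 0 ≤ Q := sum_nonneg fun i _ => Real.rpow_nonneg (hP i) p
  have hmerged : cutval w (S i₀ ∪ R) ≤ 2 * ∑ i, cutval w (P i) := by
    rw [hR, ← compl_eq_univ_sdiff, two_mul]
    exact (cutval_union_compl_biUnion_le hsymm hnn univ S i₀).trans
      (add_le_add ((hSP i₀).trans (single_le_sum (fun i _ => hP i) (mem_univ i₀)))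
        (sum_le_sum fun i _ => hSP i))
  have hmerged_pow : cutval w (S i₀ ∪ R) ^ p ≤ 2 ^ p * (k : ℝ) ^ (p - 1) * Q :=
    calc cutval w (S i₀ ∪ R) ^ p ≤ (2 * ∑ i, cutval w (P i)) ^ p :=
          Real.rpow_le_rpow (cutval_nonneg hnn _) hmerged hp₀
      _ = 2 ^ p * (∑ i, cutval w (P i)) ^ p :=
          Real.mul_rpow zero_le_two (sum_nonneg fun i _ => hP i)
      _ ≤ 2 ^ p * ((k : ℝ) ^ (p - 1) * Q) := by
          gcongr
          simpa using Real.rpow_sum_le_const_mul_sum_rpow_of_nonneg univ hp fun i _ => hP i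
      _ = 2 ^ p * (k : ℝ) ^ (p - 1) * Q := by ring
  have hrest : ∑ i ∈ univ.erase i₀, cutval w (S i) ^ p ≤ Q :=
    (sum_le_sum fun i _ => Real.rpow_le_rpow (cutval_nonneg hnn _) (hSP i) hp₀).trans
      (sum_le_sum_of_subset_of_nonneg (erase_subset _ _) fun i _ _ => Real.rpow_nonneg (hP i) p)
  have hpower : cutval w (S i₀ ∪ R) ^ p + ∑ i ∈ univ.erase i₀, cutval w (S i) ^ p
      ≤ ((2 : ℝ) ^ p * (k : ℝ) ^ (p - 1) + 1) * Q := by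
    linarith
  refine ⟨hpower, rpow_one_div_le_mul_of_le_rpow_mul ?_ (by positivity) hQ (by linarith)
    (hpower.trans (mul_le_mul_of_nonneg_right
      (two_rpow_mul_add_one_le (by exact_mod_cast hk) hp) hQ))⟩
  exact add_nonneg (Real.rpow_nonneg (cutval_nonneg hnn _) p)
    (sum_nonneg fun i _ => Real.rpow_nonneg (cutval_nonneg hnn _) p)

/-- The trivial `O(k^{1−1/p})`-approximation: given disjoint sets `S_i` containing the
terminals with `cut(S_i) ≤ cut(P_i)` for an arbitrary multiway cut `(P_i)`, merging the
leftover vertices `R` into `S₁` yields a multiway cut with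
`cut(S₁ ∪ R)^p + Σ_{i≥2} cut(S_i)^p ≤ (2^p k^{p−1} + 1)·Σ_i cut(P_i)^p`; in particular its
`ℓ_p`-norm objective value is at most `3·k^{1−1/p}` times that of `(P_i)`. -/
theorem trivial_approximation {V : Type*} [Fintype V] [DecidableEq V]
    (w : V → V → ℝ) (hsymm : ∀ u v, w u v = w v u) (hnn : ∀ u v, 0 ≤ w u v)
    (k : ℕ) (hk : 1 ≤ k) (t : Fin k → V) (htinj : Function.Injective t)
    (S P : Fin k → Finset V)
    (hSdisj : ∀ i j, i ≠ j → Disjoint (S i) (S j)) (htS : ∀ i, t i ∈ S i)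
    (hPdisj : ∀ i j, i ≠ j → Disjoint (P i) (P j))
    (hPcover : Finset.univ.biUnion P = Finset.univ)
    (htP : ∀ i, t i ∈ P i)
    (hSP : ∀ i, cutval w (S i) ≤ cutval w (P i))
    (p : ℝ) (hp : 1 ≤ p)
    (R : Finset V) (hR : R = Finset.univ \ Finset.univ.biUnion S) :
    cutval w (S ⟨0, hk⟩ ∪ R) ^ p + ∑ i ∈ Finset.univ.erase ⟨0, hk⟩, cutval w (S i) ^ p ≤
        ((2 : ℝ) ^ p * (k : ℝ) ^ (p - 1) + 1) * ∑ i, cutval w (P i) ^ p ∧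
      (cutval w (S ⟨0, hk⟩ ∪ R) ^ p +
          ∑ i ∈ Finset.univ.erase ⟨0, hk⟩, cutval w (S i) ^ p) ^ (1 / p) ≤
        3 * (k : ℝ) ^ (1 - 1 / p) * (∑ i, cutval w (P i) ^ p) ^ (1 / p) :=
  trivial_approximation_general w hsymm hnn k hk S P hSP p hp R hR
end

section
/- Let p > 1 be real and m ≥ 1 an integer, and set d := (12m + 12)^{1/(p−1)}. Then (2d + 1/12)^p − (2d)^p > m + (1/4)^p. (In particular, (2d + 1/12)^p − (2d)^p ≥ p(2d)^{p−1}/12 = 2^{p−1}·p·(m+1) > m + (1/4)^p.) -/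
open Real

/-- Bernoulli's inequality applied to `(x + h) ^ p = x ^ p * (1 + h / x) ^ p`. -/
theorem Real.rpow_add_mul_rpow_sub_one_le_rpow_add {x h p : ℝ} (hx : 0 < x) (hh : -x ≤ h)
    (hp : 1 ≤ p) : x ^ p + p * x ^ (p - 1) * h ≤ (x + h) ^ p := by
  have hs : -1 ≤ h / x := by rwa [le_div_iff₀ hx, neg_one_mul]
  have hbernoulli : 1 + p * (h / x) ≤ (1 + h / x) ^ p := one_add_mul_self_le_rpow_one_add hs hp
  calc x ^ p + p * x ^ (p - 1) * h = x ^ p * (1 + p * (h / x)) := by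
        rw [rpow_sub_one hx.ne']; field_simp
    _ ≤ x ^ p * (1 + h / x) ^ p := by gcongr
    _ = (x + h) ^ p := by
        rw [← mul_rpow hx.le (by linarith)]
        congr 1; field_simp

theorem planar_core_inequality_general (p : ℝ) (hp : 1 < p) (m : ℕ)
    (d : ℝ) (hd : d = (12 * (m : ℝ) + 12) ^ (1 / (p - 1))) :
    (m : ℝ) + (1 / 4 : ℝ) ^ p < (2 * d + 1 / 12) ^ p - (2 * d) ^ p := by
  have hd_pos : 0 < d := hd ▸ by positivity
  have hd_pow : (2 * d) ^ (p - 1) = 2 ^ (p - 1) * (12 * (m : ℝ) + 12) := by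
    rw [mul_rpow zero_le_two hd_pos.le, hd, one_div, rpow_inv_rpow (by positivity) (by linarith)]
  have h_quarter : (1 / 4 : ℝ) ^ p < 1 := rpow_lt_one (by norm_num) (by norm_num) (by linarith)
  have h_slope : 1 ≤ p * 2 ^ (p - 1) :=
    one_le_mul_of_one_le_of_one_le hp.le (one_le_rpow one_le_two (by linarith))
  have h_tangent := rpow_add_mul_rpow_sub_one_le_rpow_add (by positivity : 0 < 2 * d)
    (by linarith : -(2 * d) ≤ 1 / 12) hp.le
  calc (m : ℝ) + (1 / 4) ^ p < m + 1 := by linarith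
    _ ≤ p * 2 ^ (p - 1) * (m + 1) := le_mul_of_one_le_left (by positivity) h_slope
    _ = p * (2 * d) ^ (p - 1) * (1 / 12) := by rw [hd_pow]; ring
    _ ≤ (2 * d + 1 / 12) ^ p - (2 * d) ^ p := by linarith

/-- Analytic core of the planar hardness reduction from 3-partition: for `p > 1`, `m ≥ 1`
and `d = (12m+12)^{1/(p−1)}`, we have `(2d + 1/12)^p − (2d)^p > m + (1/4)^p`. -/
theorem planar_core_inequality (p : ℝ) (hp : 1 < p) (m : ℕ) (hm : 1 ≤ m)
    (d : ℝ) (hd : d = (12 * (m : ℝ) + 12) ^ (1 / (p - 1))) :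
    (m : ℝ) + (1 / 4 : ℝ) ^ p < (2 * d + 1 / 12) ^ p - (2 * d) ^ p :=
  planar_core_inequality_general p hp m d hd
end

section
/- Fix a real p > 1. In the bisection-reduction instance (with G = (V,E) simple with |V| = n even, unit edge weights, integer C ≥ 0, a := max{1, 8n³/(p−1), 2C+1}, b := 1 + max{1, (2an+C)^{p/(p−1)}, 3an}, graph G' on V' := V ∪ {u,d,ℓ,r} with weight 1 on edges of E, weight a on {v,x} for all v ∈ V and x ∈ {u,d,ℓ,r}, and weight b on {u,d}): if (P_u, P_d, P_ℓ, P_r) is a partition of V' with u ∈ P_u, d ∈ P_d, ℓ ∈ P_ℓ, r ∈ P_r and cut(P_u)^p + cut(P_d)^p + cut(P_ℓ)^p + cut(P_r)^p ≤ 2(b+an)^p + 2(2an+C)^p, then P_u = {u} and P_d = {d}. -/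
open Finset

/-- Edge weights of the graph `G'` in the reduction from graph bisection: original edges
have weight `1`; each original vertex is joined to each of the four new terminals
`u,d,ℓ,r` (encoded as `Sum.inr 0, 1, 2, 3`) with weight `a`; the edge `{u,d}` has
weight `b`. -/
noncomputable def wBis {V : Type*} (G : SimpleGraph V) [DecidableRel G.Adj] (a b : ℝ) :
    (V ⊕ Fin 4) → (V ⊕ Fin 4) → ℝ
  | Sum.inl x, Sum.inl y => if G.Adj x y then 1 else 0
  | Sum.inl _, Sum.inr _ => a
  | Sum.inr _, Sum.inl _ => a
  | Sum.inr i, Sum.inr j => if (i = 0 ∧ j = 1) ∨ (i = 1 ∧ j = 0) then b else 0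

/-!
Each part contains exactly one terminal. Against the edgeless graph, a part made of terminal `i`
and `k` original vertices has cut exactly `β i + a n + 2 a k` (with `β = b` at `u, d` and `0` at
`ℓ, r`), and the edges of `G` only increase cuts. If `P_u`, say, contains an original vertex,
then with `X = b + a n` the objective is at least `(X + 2a)^p + X^p ≥ 2 X^p + 2 a p X^(p-1)` by
Bernoulli's inequality, while `b ≥ (2an + C)^(p/(p-1))` gives `(2an + C)^p ≤ X^(p-1)`, so the
objective exceeds `2 X^p + 2 (2an + C)^p` because `a p > 1`.
-/

lemma compl_disjSum {α β : Type*} [Fintype α] [Fintype β] [DecidableEq α] [DecidableEq β]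
    (s : Finset α) (t : Finset β) : (s.disjSum t)ᶜ = sᶜ.disjSum tᶜ := by
  ext x; cases x <;> simp

lemma eq_singleton_inr_of_toLeft_eq_empty {α β : Type*} [DecidableEq α] [DecidableEq β]
    {S : Finset (α ⊕ β)} {i : β} (hL : S.toLeft = ∅) (hR : S.toRight = {i}) :
    S = {Sum.inr i} := by
  rw [← toLeft_disjSum_toRight (u := S), hL, hR]
  ext x; cases x <;> simp

section

variable {V : Type*}

lemma wBis_bot_le (G : SimpleGraph V) [DecidableRel G.Adj] (a b : ℝ) (x y : V ⊕ Fin 4) :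
    wBis ⊥ a b x y ≤ wBis G a b x y := by
  unfold wBis
  split <;> simp only [SimpleGraph.bot_adj, if_false, le_refl]
  exact ite_nonneg zero_le_one le_rfl

lemma wBis_nonneg (G : SimpleGraph V) [DecidableRel G.Adj] {a b : ℝ} (ha : 0 ≤ a) (hb : 0 ≤ b)
    (x y : V ⊕ Fin 4) : 0 ≤ wBis G a b x y := by
  unfold wBis
  split <;> first | assumption | exact ite_nonneg zero_le_one le_rfl | exact ite_nonneg hb le_rfl

lemma cutval_nonneg_s16 [Fintype V] [DecidableEq V] {w : V → V → ℝ} (hw : ∀ x y, 0 ≤ w x y)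
    (S : Finset V) : 0 ≤ cutval w S :=
  sum_nonneg fun x _ => sum_nonneg fun y _ => hw x y

lemma cutval_mono [Fintype V] [DecidableEq V] {w w' : V → V → ℝ} (h : ∀ x y, w x y ≤ w' x y)
    (S : Finset V) : cutval w S ≤ cutval w' S :=
  sum_le_sum fun x _ => sum_le_sum fun y _ => h x y

lemma cutval_wBis_bot_disjSum_singleton [Fintype V] [DecidableEq V] (a b : ℝ) (K : Finset V)
    (i : Fin 4) :
    cutval (wBis ⊥ a b) (K.disjSum {i}) =
      (if i = 0 ∨ i = 1 then b else 0) + a * Fintype.card V + 2 * a * #K := by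
  simp only [cutval, compl_disjSum, sum_disjSum, sum_singleton, wBis, SimpleGraph.bot_adj,
    if_false, sum_const_zero, sum_const, nsmul_eq_mul, zero_add, card_compl,
    Nat.cast_sub (card_le_univ K), card_singleton, Fintype.card_fin]
  fin_cases i <;> simp [compl_eq_univ_sdiff] <;> ring

lemma le_cutval_wBis [Fintype V] [DecidableEq V] (G : SimpleGraph V) [DecidableRel G.Adj]
    (a b : ℝ) {S : Finset (V ⊕ Fin 4)} {i : Fin 4} (hS : S.toRight = {i}) :
    (if i = 0 ∨ i = 1 then b else 0) + a * Fintype.card V + 2 * a * #S.toLeft ≤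
      cutval (wBis G a b) S :=
  calc _ = cutval (wBis ⊥ a b) (S.toLeft.disjSum S.toRight) := by
        rw [hS, cutval_wBis_bot_disjSum_singleton]
    _ ≤ cutval (wBis G a b) S := by
        rw [toLeft_disjSum_toRight]; exact cutval_mono (wBis_bot_le G a b) S

end

open Real

lemma rpow_add_mul_rpow_sub_one_le_rpow_add {p X t : ℝ} (hp : 1 ≤ p) (hX : 0 < X) (ht : 0 ≤ t) :
    X ^ p + p * t * X ^ (p - 1) ≤ (X + t) ^ p :=
  calc X ^ p + p * t * X ^ (p - 1) = X ^ p * (1 + p * (t / X)) := by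
        rw [rpow_sub_one hX.ne']; field_simp
    _ ≤ X ^ p * (1 + t / X) ^ p :=
        mul_le_mul_of_nonneg_left
          (one_add_mul_self_le_rpow_one_add (by linarith [div_nonneg ht hX.le]) hp) (by positivity)
    _ = (X + t) ^ p := by
        rw [← mul_rpow hX.le (by positivity)]; congr 1; field_simp

lemma rpow_le_rpow_sub_one_of_rpow_div_le {p X Y : ℝ} (hp : 1 < p) (hY : 0 ≤ Y)
    (h : Y ^ (p / (p - 1)) ≤ X) : Y ^ p ≤ X ^ (p - 1) :=
  calc Y ^ p = (Y ^ (p / (p - 1))) ^ (p - 1) := by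
        rw [← rpow_mul hY, div_mul_cancel₀ _ (by linarith)]
    _ ≤ X ^ (p - 1) := rpow_le_rpow (rpow_nonneg hY _) h (by linarith)

lemma rpow_add_two_mul_rpow_lt_rpow_add {p X Y t : ℝ} (hp : 1 < p) (ht : 2 ≤ t) (hX : 0 < X)
    (hY : 0 ≤ Y) (h : Y ^ (p / (p - 1)) ≤ X) : X ^ p + 2 * Y ^ p < (X + t) ^ p := by
  have hXp : 0 < X ^ (p - 1) := rpow_pos_of_pos hX _
  calc X ^ p + 2 * Y ^ p ≤ X ^ p + 2 * X ^ (p - 1) := by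
        linarith [rpow_le_rpow_sub_one_of_rpow_div_le hp hY h]
    _ < X ^ p + p * t * X ^ (p - 1) := by gcongr; nlinarith
    _ ≤ (X + t) ^ p := rpow_add_mul_rpow_sub_one_le_rpow_add hp.le hX (by linarith)

lemma eq_zero_of_sum_rpow_le {p a X Y c₀ c₁ c₂ c₃ : ℝ} {k k' : ℕ} (hp : 1 < p) (ha : 1 ≤ a)
    (hX : 0 < X) (hY : 0 ≤ Y) (hYX : Y ^ (p / (p - 1)) ≤ X)
    (h₀ : X + 2 * a * k ≤ c₀) (h₁ : X + 2 * a * k' ≤ c₁) (h₂ : 0 ≤ c₂) (h₃ : 0 ≤ c₃)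
    (hsum : c₀ ^ p + c₁ ^ p + c₂ ^ p + c₃ ^ p ≤ 2 * X ^ p + 2 * Y ^ p) : k = 0 := by
  by_contra hk
  have hk1 : (1 : ℝ) ≤ k := by exact_mod_cast Nat.one_le_iff_ne_zero.2 hk
  have hk' : (0 : ℝ) ≤ k' := Nat.cast_nonneg k'
  have hlt := rpow_add_two_mul_rpow_lt_rpow_add hp (by linarith) hX hY hYX (t := 2 * a)
  have hc₀ : (X + 2 * a) ^ p ≤ c₀ ^ p := rpow_le_rpow (by linarith) (by nlinarith) (by linarith)
  have hc₁ : X ^ p ≤ c₁ ^ p := rpow_le_rpow hX.le (by nlinarith) (by linarith)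
  linarith [rpow_nonneg h₂ p, rpow_nonneg h₃ p]

theorem bisection_reduction_singletons_general {V : Type*} [Fintype V] [DecidableEq V]
    (p : ℝ) (hp : 1 < p) (G : SimpleGraph V) [DecidableRel G.Adj] (C : ℕ)
    (n : ℝ) (hn : n = Fintype.card V)
    (a b : ℝ)
    (ha : a = max 1 (max (8 * n ^ 3 / (p - 1)) (2 * (C : ℝ) + 1)))
    (hb : b = 1 + max 1 (max ((2 * a * n + (C : ℝ)) ^ (p / (p - 1))) (3 * a * n)))
    (Pu Pd Pl Pr : Finset (V ⊕ Fin 4))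
    (hu : Sum.inr 0 ∈ Pu) (hd : Sum.inr 1 ∈ Pd) (hl : Sum.inr 2 ∈ Pl) (hr : Sum.inr 3 ∈ Pr)
    (hud : Disjoint Pu Pd) (hul : Disjoint Pu Pl) (hur : Disjoint Pu Pr)
    (hdl : Disjoint Pd Pl) (hdr : Disjoint Pd Pr) (hlr : Disjoint Pl Pr)
    (hcheap : cutval (wBis G a b) Pu ^ p + cutval (wBis G a b) Pd ^ p +
        cutval (wBis G a b) Pl ^ p + cutval (wBis G a b) Pr ^ p ≤
      2 * (b + a * n) ^ p + 2 * (2 * a * n + (C : ℝ)) ^ p) :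
    Pu = {Sum.inr 0} ∧ Pd = {Sum.inr 1} := by
  have ha1 : 1 ≤ a := ha ▸ le_max_left _ _
  have hn0 : 0 ≤ n := hn ▸ Nat.cast_nonneg _
  have hY : 0 ≤ 2 * a * n + C := by positivity
  have hbY : 1 + (2 * a * n + C) ^ (p / (p - 1)) ≤ b :=
    hb ▸ by gcongr; exact (le_max_left _ _).trans (le_max_right _ _)
  have hb0 : 1 ≤ b := by linarith [rpow_nonneg hY (p / (p - 1))]
  have hYX : (2 * a * n + C) ^ (p / (p - 1)) ≤ b + a * n := by nlinarith
  have hX : 0 < b + a * n := by nlinarith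
  obtain ⟨hPu, hPd, hPl, hPr⟩ : Pu.toRight = {0} ∧ Pd.toRight = {1} ∧ Pl.toRight = {2} ∧
      Pr.toRight = {3} := by
    rw [disjoint_left] at hud hul hur hdl hdr hlr
    refine ⟨?_, ?_, ?_, ?_⟩ <;>
      refine eq_singleton_iff_unique_mem.2 ⟨mem_toRight.2 ‹_›, fun j hj => ?_⟩ <;>
      rw [mem_toRight] at hj <;> fin_cases j <;> first | rfl | tauto
  have hcut_nonneg (P : Finset (V ⊕ Fin 4)) : 0 ≤ cutval (wBis G a b) P :=
    cutval_nonneg_s16 (wBis_nonneg G (by linarith) (by linarith)) P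
  have bu : b + a * n + 2 * a * #Pu.toLeft ≤ cutval (wBis G a b) Pu := by
    simpa [hn] using le_cutval_wBis G a b hPu
  have bd : b + a * n + 2 * a * #Pd.toLeft ≤ cutval (wBis G a b) Pd := by
    simpa [hn] using le_cutval_wBis G a b hPd
  constructor
  · refine eq_singleton_inr_of_toLeft_eq_empty (card_eq_zero.1 ?_) hPu
    exact eq_zero_of_sum_rpow_le hp ha1 hX hY hYX bu bd (hcut_nonneg Pl) (hcut_nonneg Pr) hcheap
  · refine eq_singleton_inr_of_toLeft_eq_empty (card_eq_zero.1 ?_) hPd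
    exact eq_zero_of_sum_rpow_le hp ha1 hX hY hYX bd bu (hcut_nonneg Pl) (hcut_nonneg Pr)
      (by linarith)

/-- In the bisection-reduction instance, any multiway cut whose `ℓ_p`-norm objective value
raised to the `p`-th power is at most `2(b+an)^p + 2(2an+C)^p` has the parts containing
`u` and `d` as singletons. -/
theorem bisection_reduction_singletons {V : Type*} [Fintype V] [DecidableEq V]
    (p : ℝ) (hp : 1 < p) (G : SimpleGraph V) [DecidableRel G.Adj] (C : ℕ)
    (n : ℝ) (hn : n = Fintype.card V) (hneven : Even (Fintype.card V))
    (a b : ℝ)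
    (ha : a = max 1 (max (8 * n ^ 3 / (p - 1)) (2 * (C : ℝ) + 1)))
    (hb : b = 1 + max 1 (max ((2 * a * n + (C : ℝ)) ^ (p / (p - 1))) (3 * a * n)))
    (Pu Pd Pl Pr : Finset (V ⊕ Fin 4))
    (hu : Sum.inr 0 ∈ Pu) (hd : Sum.inr 1 ∈ Pd) (hl : Sum.inr 2 ∈ Pl) (hr : Sum.inr 3 ∈ Pr)
    (hud : Disjoint Pu Pd) (hul : Disjoint Pu Pl) (hur : Disjoint Pu Pr)
    (hdl : Disjoint Pd Pl) (hdr : Disjoint Pd Pr) (hlr : Disjoint Pl Pr)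
    (hcover : Pu ∪ Pd ∪ Pl ∪ Pr = Finset.univ)
    (hcheap : cutval (wBis G a b) Pu ^ p + cutval (wBis G a b) Pd ^ p +
        cutval (wBis G a b) Pl ^ p + cutval (wBis G a b) Pr ^ p ≤
      2 * (b + a * n) ^ p + 2 * (2 * a * n + (C : ℝ)) ^ p) :
    Pu = {Sum.inr 0} ∧ Pd = {Sum.inr 1} :=
  bisection_reduction_singletons_general p hp G C n hn a b ha hb Pu Pd Pl Pr hu hd hl hr hud hul hur
    hdl hdr hlr hcheap
end
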